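/- Energy dissipation of the scheme with zero forcing: In the discrete ensemble scheme setting, fix j ∈ {1,…,J}, assume Δt > 0, μ > 1/2, α_j > 0, and f_{1,j}^{n+1} = f_{2,j}^{n+1} = 0 for all n. Then the discrete energy E_j^n := ‖v_j^n‖² + ‖w_j^n‖² + ((ν̄+ν̄_m)·Δt/2)·(‖∇v_j^n‖² + ‖∇w_j^n‖²) is nonincreasing in n: E_j^{n+1} ≤ E_j^n for every n = 0,…,M−1. -/

import Mathlib

open MeasureTheory Finset RealInnerProductSpace

noncomputable section

abbrev Euc (d : ℕ) := EuclideanSpace ℝ (Fin d)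

def eb {d : ℕ} (i : Fin d) : Euc d := EuclideanSpace.single i 1

def frobInner {d : ℕ} (A B : Euc d →L[ℝ] Euc d) : ℝ :=
  ∑ i : Fin d, ⟪A (eb i), B (eb i)⟫

def l2inner {d : ℕ} (φ ψ : Euc d → Euc d) : ℝ := ∫ x, ⟪φ x, ψ x⟫

def l2norm {d : ℕ} (φ : Euc d → Euc d) : ℝ := Real.sqrt (l2inner φ φ)

def gradInner {d : ℕ} (φ ψ : Euc d → Euc d) : ℝ :=
  ∫ x, frobInner (fderiv ℝ φ x) (fderiv ℝ ψ x)

def gradNorm {d : ℕ} (φ : Euc d → Euc d) : ℝ := Real.sqrt (gradInner φ φ)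

def divg {d : ℕ} (φ : Euc d → Euc d) (x : Euc d) : ℝ :=
  ∑ i : Fin d, ⟪fderiv ℝ φ x (eb i), eb i⟫

def triForm {d : ℕ} (u v w : Euc d → Euc d) : ℝ :=
  ∫ x, ⟪fderiv ℝ v x (u x), w x⟫

def IsFEMSpace (d : ℕ) (Ω : Set (Euc d)) (Vh : Submodule ℝ (Euc d → Euc d)) : Prop :=
  FiniteDimensional ℝ Vh ∧
  ∀ χ ∈ Vh, ContDiff ℝ (⊤ : ℕ∞) χ ∧ HasCompactSupport χ ∧ tsupport χ ⊆ Ω ∧ ∀ x, divg χ x = 0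

def mean (J : ℕ) (ν : Fin J → ℝ) : ℝ := (∑ j, ν j) / J

def alphaCoef (J : ℕ) (ν νm : Fin J → ℝ) (j : Fin J) : ℝ :=
  mean J ν + mean J νm - |ν j - νm j| - |(ν j - mean J ν) + (νm j - mean J νm)|

def ensAvg {d : ℕ} (J : ℕ) (z : Fin J → ℕ → Euc d → Euc d) (n : ℕ) : Euc d → Euc d :=
  fun x => (J : ℝ)⁻¹ • ∑ j, z j n x

def fluct {d : ℕ} (J : ℕ) (z : Fin J → ℕ → Euc d → Euc d) (j : Fin J) (n : ℕ) :
    Euc d → Euc d :=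
  fun x => z j n x - ensAvg J z n x

def lmax {d : ℕ} (J : ℕ) (z : Fin J → ℕ → Euc d → Euc d) (n : ℕ) (x : Euc d) : ℝ :=
  ⨆ j : Fin J, ‖fluct J z j n x‖

def BddMeasurable {d : ℕ} (f : Euc d → Euc d) : Prop :=
  Measurable f ∧ ∃ C, ∀ x, ‖f x‖ ≤ C

def SchemeSol (d J : ℕ) (Vh : Submodule ℝ (Euc d → Euc d)) (Δt μ : ℝ)
    (ν νm : Fin J → ℝ) (M : ℕ) (v w f1 f2 : Fin J → ℕ → Euc d → Euc d) : Prop :=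
  (∀ j n, n ≤ M → v j n ∈ Vh ∧ w j n ∈ Vh) ∧
  (∀ j n, BddMeasurable (f1 j n) ∧ BddMeasurable (f2 j n)) ∧
  (∀ n, n < M → ∀ j : Fin J, ∀ χ ∈ Vh,
    (l2inner (fun x => Δt⁻¹ • (v j (n+1) x - v j n x)) χ
        + triForm (ensAvg J w n) (v j (n+1)) χ
        + ((mean J ν + mean J νm)/2) * gradInner (v j (n+1)) χ
        + 2*μ*Δt * ∫ x, (lmax J w n x)^2 * frobInner (fderiv ℝ (v j (n+1)) x) (fderiv ℝ χ x)
      = l2inner (f1 j (n+1)) χ - triForm (fluct J w j n) (v j n) χ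
        - ((ν j - νm j)/2) * gradInner (w j n) χ
        - (((ν j - mean J ν) + (νm j - mean J νm))/2) * gradInner (v j n) χ) ∧
    (l2inner (fun x => Δt⁻¹ • (w j (n+1) x - w j n x)) χ
        + triForm (ensAvg J v n) (w j (n+1)) χ
        + ((mean J ν + mean J νm)/2) * gradInner (w j (n+1)) χ
        + 2*μ*Δt * ∫ x, (lmax J v n x)^2 * frobInner (fderiv ℝ (w j (n+1)) x) (fderiv ℝ χ x)
      = l2inner (f2 j (n+1)) χ - triForm (fluct J v j n) (w j n) χ
        - ((ν j - νm j)/2) * gradInner (v j n) χ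
        - (((ν j - mean J ν) + (νm j - mean J νm))/2) * gradInner (w j n) χ))

/-!
Test the `v`-equation with `v_j^{n+1}` and the `w`-equation with `w_j^{n+1}`. For a
divergence-free `u` the form `b(u, ·, ·)` is skew-symmetric (integrate `⟨φ, ψ⟩` by parts along
`u`), so the convection by the ensemble mean drops out and the explicit fluctuation term becomes
`b(w'_j, v^{n+1}, v^n - v^{n+1})`. As `|w'_j| ≤ l_w` pointwise, Young's inequality splits it
between the eddy-viscosity term `μΔt ∫ l_w² |∇v^{n+1}|²` and the numerical dissipation
`‖v^{n+1} - v^n‖² / (2Δt)` produced by `2(a - b, a) = ‖a‖² - ‖b‖² + ‖a - b‖²`; this is where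
`μ ≥ 1/2` is needed. Each explicit viscous term `c (∇φ, ∇ψ)` is at most
`|c| (‖∇φ‖² + ‖∇ψ‖²) / 2` in absolute value, and `α_j ≥ 0` says exactly that these weights add up
to at most `(ν̄ + ν̄_m) / 2`.
-/

namespace EnsembleScheme

variable {d : ℕ}

structure IsC1Compact (φ : Euc d → Euc d) : Prop where
  contDiff : ContDiff ℝ 1 φ
  hasCompactSupport : HasCompactSupport φ

namespace IsC1Compact

variable {φ ψ : Euc d → Euc d}

lemma continuous (hφ : IsC1Compact φ) : Continuous φ := hφ.contDiff.continuous

lemma continuous_fderiv (hφ : IsC1Compact φ) : Continuous (fderiv ℝ φ) :=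
  hφ.contDiff.continuous_fderiv one_ne_zero

lemma hasCompactSupport_fderiv (hφ : IsC1Compact φ) : HasCompactSupport (fderiv ℝ φ) :=
  hφ.hasCompactSupport.fderiv ℝ

lemma sub (hφ : IsC1Compact φ) (hψ : IsC1Compact ψ) : IsC1Compact (φ - ψ) :=
  ⟨hφ.contDiff.sub hψ.contDiff, hφ.hasCompactSupport.sub hψ.hasCompactSupport⟩

end IsC1Compact

lemma basisFun_eq_eb : ⇑(EuclideanSpace.basisFun (Fin d) ℝ) = eb := by
  funext i
  simp [eb]

lemma frobInner_self_nonneg (A : Euc d →L[ℝ] Euc d) : 0 ≤ frobInner A A :=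
  sum_nonneg fun _ _ => real_inner_self_nonneg

lemma abs_frobInner_le (A B : Euc d →L[ℝ] Euc d) :
    |frobInner A B| ≤ (frobInner A A + frobInner B B) / 2 := by
  simp only [frobInner, real_inner_self_eq_norm_sq, ← sum_add_distrib, sum_div]
  refine (abs_sum_le_sum_abs _ _).trans (sum_le_sum fun i _ => ?_)
  nlinarith [abs_real_inner_le_norm (A (eb i)) (B (eb i)), two_mul_le_add_sq ‖A (eb i)‖ ‖B (eb i)‖]

lemma sum_inner_eb_smul_eb (u : Euc d) : ∑ i, ⟪eb i, u⟫ • eb i = u := by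
  rw [← basisFun_eq_eb]
  exact (EuclideanSpace.basisFun (Fin d) ℝ).sum_repr' u

lemma sum_inner_eb_sq (u : Euc d) : ∑ i, ⟪eb i, u⟫ ^ 2 = ‖u‖ ^ 2 := by
  rw [← basisFun_eq_eb]
  exact (EuclideanSpace.basisFun (Fin d) ℝ).sum_sq_inner_right u

lemma norm_apply_sq_le_frobInner (A : Euc d →L[ℝ] Euc d) (u : Euc d) :
    ‖A u‖ ^ 2 ≤ frobInner A A * ‖u‖ ^ 2 := by
  have hAu : A u = ∑ i, ⟪eb i, u⟫ • A (eb i) := by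
    conv_lhs => rw [← sum_inner_eb_smul_eb u]
    simp only [map_sum, map_smul]
  calc ‖A u‖ ^ 2 ≤ (∑ i, |⟪eb i, u⟫| * ‖A (eb i)‖) ^ 2 := by
        rw [hAu]
        gcongr
        exact (norm_sum_le _ _).trans_eq (by simp [norm_smul])
    _ ≤ (∑ i, |⟪eb i, u⟫| ^ 2) * ∑ i, ‖A (eb i)‖ ^ 2 := sum_mul_sq_le_sq_mul_sq _ _ _
    _ = frobInner A A * ‖u‖ ^ 2 := by
        simp [sum_inner_eb_sq, frobInner, mul_comm]

lemma mul_le_mul_sq_add_sq_div {a b θ : ℝ} (hθ : 0 < θ) :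
    a * b ≤ θ * a ^ 2 + b ^ 2 / (4 * θ) := by
  have h : θ * a ^ 2 + b ^ 2 / (4 * θ) - a * b = (2 * θ * a - b) ^ 2 / (4 * θ) := by
    field_simp
    ring
  have : 0 ≤ (2 * θ * a - b) ^ 2 / (4 * θ) := by positivity
  linarith

section Integrability

variable {u φ ψ : Euc d → Euc d}

lemma integrable_inner (hφ : Continuous φ) (hφ' : HasCompactSupport φ) (hψ : Continuous ψ) :
    Integrable fun x => ⟪φ x, ψ x⟫ :=
  (hφ.inner hψ).integrable_of_hasCompactSupport <|
    hφ'.mono fun x hx hφx => hx (by simp [hφx])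

lemma integrable_mul_frobInner {ρ : Euc d → ℝ} (hρ : Continuous ρ) (hφ : IsC1Compact φ)
    (hψ : IsC1Compact ψ) :
    Integrable fun x => ρ x * frobInner (fderiv ℝ φ x) (fderiv ℝ ψ x) := by
  refine (hρ.mul ?_).integrable_of_hasCompactSupport <|
    hφ.hasCompactSupport_fderiv.mono fun x hx hφx => hx (by simp [frobInner, hφx])
  exact continuous_finsetSum _ fun i _ =>
    (hφ.continuous_fderiv.clm_apply continuous_const).inner
      (hψ.continuous_fderiv.clm_apply continuous_const)

lemma integrable_frobInner (hφ : IsC1Compact φ) (hψ : IsC1Compact ψ) :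
    Integrable fun x => frobInner (fderiv ℝ φ x) (fderiv ℝ ψ x) := by
  simpa using integrable_mul_frobInner (ρ := fun _ => 1) continuous_const hφ hψ

lemma integrable_inner_fderiv_apply (hu : Continuous u) (hu' : HasCompactSupport u)
    (hφ : ContDiff ℝ 1 φ) (hψ : Continuous ψ) :
    Integrable fun x => ⟪fderiv ℝ φ x (u x), ψ x⟫ :=
  (((hφ.continuous_fderiv one_ne_zero).clm_apply hu).inner hψ).integrable_of_hasCompactSupport <|
    hu'.mono fun x hx hux => hx (by simp [hux])

end Integrability

section L2

variable {φ ψ χ : Euc d → Euc d}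

lemma l2inner_self_nonneg (φ : Euc d → Euc d) : 0 ≤ l2inner φ φ :=
  integral_nonneg fun _ => real_inner_self_nonneg

lemma l2norm_sq (φ : Euc d → Euc d) : l2norm φ ^ 2 = l2inner φ φ :=
  Real.sq_sqrt (l2inner_self_nonneg φ)

lemma l2inner_zero_left (ψ : Euc d → Euc d) : l2inner 0 ψ = 0 := by
  simp [l2inner]

lemma l2inner_smul_sub_left (c : ℝ) (hφ : Continuous φ) (hφ' : HasCompactSupport φ)
    (hψ : Continuous ψ) (hψ' : HasCompactSupport ψ) (hχ : Continuous χ) :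
    l2inner (fun x => c • (φ x - ψ x)) χ = c * (l2inner φ χ - l2inner ψ χ) := by
  simp only [l2inner, real_inner_smul_left, inner_sub_left]
  rw [integral_const_mul, integral_sub (integrable_inner hφ hφ' hχ) (integrable_inner hψ hψ' hχ)]

lemma l2inner_sub_sub_self (hφ : Continuous φ) (hφ' : HasCompactSupport φ)
    (hψ : Continuous ψ) (hψ' : HasCompactSupport ψ) :
    l2inner (φ - ψ) (φ - ψ) = l2inner φ φ - 2 * l2inner φ ψ + l2inner ψ ψ := by
  have hφφ := integrable_inner hφ hφ' hφ
  have hφψ := (integrable_inner hφ hφ' hψ).const_mul 2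
  simp only [l2inner, Pi.sub_apply, real_inner_sub_sub_self]
  rw [integral_add (f := fun x => ⟪φ x, φ x⟫ - 2 * ⟪φ x, ψ x⟫) (hφφ.sub hφψ)
      (integrable_inner hψ hψ' hψ), integral_sub hφφ hφψ,
    integral_const_mul]

end L2

section Gradient

variable {φ ψ : Euc d → Euc d}

lemma gradInner_self_nonneg (φ : Euc d → Euc d) : 0 ≤ gradInner φ φ :=
  integral_nonneg fun _ => frobInner_self_nonneg _

lemma gradNorm_sq (φ : Euc d → Euc d) : gradNorm φ ^ 2 = gradInner φ φ :=
  Real.sq_sqrt (gradInner_self_nonneg φ)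

lemma abs_gradInner_le (hφ : IsC1Compact φ) (hψ : IsC1Compact ψ) :
    |gradInner φ ψ| ≤ (gradInner φ φ + gradInner ψ ψ) / 2 := by
  calc |gradInner φ ψ| ≤ ∫ x, |frobInner (fderiv ℝ φ x) (fderiv ℝ ψ x)| :=
        abs_integral_le_integral_abs
    _ ≤ ∫ x, (frobInner (fderiv ℝ φ x) (fderiv ℝ φ x)
          + frobInner (fderiv ℝ ψ x) (fderiv ℝ ψ x)) / 2 :=
        integral_mono (integrable_frobInner hφ hψ).abs
          (((integrable_frobInner hφ hφ).add (integrable_frobInner hψ hψ)).div_const 2)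
          fun x => abs_frobInner_le _ _
    _ = (gradInner φ φ + gradInner ψ ψ) / 2 := by
        rw [integral_div, integral_add (integrable_frobInner hφ hφ) (integrable_frobInner hψ hψ)]
        rfl

lemma neg_mul_gradInner_le (a : ℝ) (hφ : IsC1Compact φ) (hψ : IsC1Compact ψ) :
    -(a * gradInner φ ψ) ≤ |a| * ((gradInner φ φ + gradInner ψ ψ) / 2) :=
  calc -(a * gradInner φ ψ) ≤ |a| * |gradInner φ ψ| := by
        rw [← abs_mul]; exact neg_le_abs _
    _ ≤ _ := mul_le_mul_of_nonneg_left (abs_gradInner_le hφ hψ) (abs_nonneg a)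

end Gradient

section Trilinear

variable {u φ ψ χ : Euc d → Euc d}

theorem integral_fderiv_apply_eq_zero {g : Euc d → ℝ} (hu : IsC1Compact u)
    (hdiv : ∀ x, divg u x = 0) (hg : ContDiff ℝ 1 g) : ∫ x, fderiv ℝ g x (u x) = 0 := by
  set f : Fin d → Euc d → ℝ := fun i x => ⟪u x, eb i⟫
  have hf (i : Fin d) : ContDiff ℝ 1 (f i) := hu.contDiff.inner ℝ contDiff_const
  have hf' (i : Fin d) : HasCompactSupport (f i) :=
    hu.hasCompactSupport.mono fun x hx hux => hx (by simp [f, hux])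
  have hfderiv (i : Fin d) (x : Euc d) : fderiv ℝ (f i) x (eb i) = ⟪fderiv ℝ u x (eb i), eb i⟫ := by
    simpa using fderiv_inner_apply ℝ (hu.contDiff.differentiable one_ne_zero x)
      (differentiableAt_const (eb i)) (eb i)
  have hexp (x : Euc d) : fderiv ℝ g x (u x) = ∑ i, f i x * fderiv ℝ g x (eb i) := by
    conv_lhs => rw [← sum_inner_eb_smul_eb (u x)]
    simp [f, real_inner_comm]
  have hIfg (i : Fin d) : Integrable fun x => f i x * fderiv ℝ g x (eb i) :=
    ((hf i).continuous.mul ((hg.continuous_fderiv one_ne_zero).clm_apply continuous_const)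
      ).integrable_of_hasCompactSupport (hf' i).mul_right
  have hIf'g (i : Fin d) : Integrable fun x => fderiv ℝ (f i) x (eb i) * g x :=
    ((((hf i).continuous_fderiv one_ne_zero).clm_apply continuous_const).mul hg.continuous
      ).integrable_of_hasCompactSupport <|
        ((hf' i).fderiv ℝ).mono fun x hx h0 => hx (by simp [h0])
  have hIffg (i : Fin d) : Integrable fun x => f i x * g x :=
    ((hf i).continuous.mul hg.continuous).integrable_of_hasCompactSupport (hf' i).mul_right
  calc ∫ x, fderiv ℝ g x (u x) = ∑ i, ∫ x, f i x * fderiv ℝ g x (eb i) := by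
        simp_rw [hexp]
        exact integral_finsetSum _ fun i _ => hIfg i
    _ = ∑ i, -∫ x, fderiv ℝ (f i) x (eb i) * g x := sum_congr rfl fun i _ =>
        integral_mul_fderiv_eq_neg_fderiv_mul_of_integrable (hIf'g i) (hIfg i) (hIffg i)
          (fun x _ => (hf i).differentiable one_ne_zero x)
          (fun x _ => hg.differentiable one_ne_zero x)
    _ = -∫ x, divg u x * g x := by
        rw [sum_neg_distrib, ← integral_finsetSum _ fun i _ => hIf'g i]
        simp_rw [← sum_mul, hfderiv, divg]
    _ = 0 := by simp [hdiv]

lemma triForm_add_triForm_swap (hu : IsC1Compact u) (hdiv : ∀ x, divg u x = 0)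
    (hφ : ContDiff ℝ 1 φ) (hψ : ContDiff ℝ 1 ψ) : triForm u φ ψ + triForm u ψ φ = 0 := by
  have hI {φ ψ : Euc d → Euc d} (hφ : ContDiff ℝ 1 φ) (hψ : ContDiff ℝ 1 ψ) :=
    integrable_inner_fderiv_apply hu.continuous hu.hasCompactSupport hφ hψ.continuous
  rw [triForm, triForm, ← integral_add (hI hφ hψ) (hI hψ hφ),
    ← integral_fderiv_apply_eq_zero hu hdiv (hφ.inner ℝ hψ)]
  congr 1
  funext x
  rw [fderiv_inner_apply ℝ (hφ.differentiable one_ne_zero x) (hψ.differentiable one_ne_zero x),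
    real_inner_comm (fderiv ℝ ψ x (u x))]
  ring

lemma triForm_self_eq_zero (hu : IsC1Compact u) (hdiv : ∀ x, divg u x = 0)
    (hφ : ContDiff ℝ 1 φ) : triForm u φ φ = 0 := by
  linarith [triForm_add_triForm_swap hu hdiv hφ hφ]

lemma triForm_sub_middle (hu : Continuous u) (hu' : HasCompactSupport u) (hφ : ContDiff ℝ 1 φ)
    (hψ : ContDiff ℝ 1 ψ) (hχ : Continuous χ) :
    triForm u (φ - ψ) χ = triForm u φ χ - triForm u ψ χ := by
  have hsub (x : Euc d) : fderiv ℝ (φ - ψ) x = fderiv ℝ φ x - fderiv ℝ ψ x :=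
    fderiv_sub ((hφ.differentiable one_ne_zero) x) ((hψ.differentiable one_ne_zero) x)
  simp only [triForm, hsub, sub_apply, inner_sub_left]
  exact integral_sub (integrable_inner_fderiv_apply hu hu' hφ hχ)
    (integrable_inner_fderiv_apply hu hu' hψ hχ)

lemma triForm_le {ρ : Euc d → ℝ} (hu : Continuous u) (hu' : HasCompactSupport u)
    (hφ : IsC1Compact φ) (hχ : Continuous χ) (hχ' : HasCompactSupport χ) (hρ : Continuous ρ)
    (huρ : ∀ x, ‖u x‖ ^ 2 ≤ ρ x) {θ : ℝ} (hθ : 0 < θ) :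
    triForm u φ χ
      ≤ θ * (∫ x, ρ x * frobInner (fderiv ℝ φ x) (fderiv ℝ φ x)) + l2inner χ χ / (4 * θ) := by
  have hpt (x : Euc d) : ⟪fderiv ℝ φ x (u x), χ x⟫
      ≤ θ * (ρ x * frobInner (fderiv ℝ φ x) (fderiv ℝ φ x)) + ⟪χ x, χ x⟫ / (4 * θ) := by
    have hF := frobInner_self_nonneg (fderiv ℝ φ x)
    calc ⟪fderiv ℝ φ x (u x), χ x⟫ ≤ ‖fderiv ℝ φ x (u x)‖ * ‖χ x‖ := real_inner_le_norm _ _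
      _ ≤ θ * ‖fderiv ℝ φ x (u x)‖ ^ 2 + ‖χ x‖ ^ 2 / (4 * θ) := mul_le_mul_sq_add_sq_div hθ
      _ ≤ θ * (ρ x * frobInner (fderiv ℝ φ x) (fderiv ℝ φ x)) + ⟪χ x, χ x⟫ / (4 * θ) := by
        rw [real_inner_self_eq_norm_sq, mul_comm (ρ x)]
        gcongr
        exact (norm_apply_sq_le_frobInner _ _).trans (by gcongr; exact huρ x)
  have hI := (integrable_mul_frobInner hρ hφ hφ).const_mul θ
  have hII := (integrable_inner hχ hχ' hχ).div_const (4 * θ)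
  calc triForm u φ χ
      ≤ ∫ x, θ * (ρ x * frobInner (fderiv ℝ φ x) (fderiv ℝ φ x)) + ⟪χ x, χ x⟫ / (4 * θ) :=
        integral_mono (integrable_inner_fderiv_apply hu hu' hφ.contDiff hχ) (hI.add hII) hpt
    _ = _ := by rw [integral_add hI hII, integral_const_mul, integral_div]; rfl

end Trilinear

theorem energy_step_le_of_eq {φ₀ φ₁ ψ U U' f : Euc d → Euc d} {ρ : Euc d → ℝ} {Δt μ κ a c : ℝ}
    (hΔt : 0 < Δt) (hμ : 1 / 2 ≤ μ) (hφ₀ : IsC1Compact φ₀) (hφ₁ : IsC1Compact φ₁)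
    (hψ : IsC1Compact ψ) (hU : IsC1Compact U) (hdivU : ∀ x, divg U x = 0)
    (hU' : IsC1Compact U') (hdivU' : ∀ x, divg U' x = 0) (hρ : Continuous ρ)
    (hU'ρ : ∀ x, ‖U' x‖ ^ 2 ≤ ρ x) (hf : f = 0)
    (heq : l2inner (fun x => Δt⁻¹ • (φ₁ x - φ₀ x)) φ₁ + triForm U φ₁ φ₁ + κ * gradInner φ₁ φ₁
        + 2 * μ * Δt * ∫ x, ρ x * frobInner (fderiv ℝ φ₁ x) (fderiv ℝ φ₁ x)
      = l2inner f φ₁ - triForm U' φ₀ φ₁ - a * gradInner ψ φ₁ - c * gradInner φ₀ φ₁) :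
    l2inner φ₁ φ₁ - l2inner φ₀ φ₀ + 2 * Δt * κ * gradInner φ₁ φ₁
      ≤ Δt * (|a| * (gradInner ψ ψ + gradInner φ₁ φ₁)
        + |c| * (gradInner φ₀ φ₀ + gradInner φ₁ φ₁)) := by
  subst hf
  have hθ : 0 < μ * Δt := mul_pos (by linarith) hΔt
  have hδ := hφ₀.sub hφ₁
  have hI : 0 ≤ ∫ x, ρ x * frobInner (fderiv ℝ φ₁ x) (fderiv ℝ φ₁ x) :=
    integral_nonneg fun x => mul_nonneg ((sq_nonneg _).trans (hU'ρ x)) (frobInner_self_nonneg _)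
  rw [l2inner_zero_left, triForm_self_eq_zero hU hdivU hφ₁.contDiff,
    l2inner_smul_sub_left _ hφ₁.continuous hφ₁.hasCompactSupport hφ₀.continuous
      hφ₀.hasCompactSupport hφ₁.continuous] at heq
  have hfluct : triForm U' φ₀ φ₁ = -triForm U' φ₁ (φ₀ - φ₁) := by
    linarith [triForm_sub_middle hU'.continuous hU'.hasCompactSupport hφ₀.contDiff
        hφ₁.contDiff hφ₁.continuous, triForm_self_eq_zero hU' hdivU' hφ₁.contDiff,
      triForm_add_triForm_swap hU' hdivU' hδ.contDiff hφ₁.contDiff]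
  have hyoung := triForm_le hU'.continuous hU'.hasCompactSupport hφ₁ hδ.continuous
    hδ.hasCompactSupport hρ hU'ρ hθ
  have hpolar : Δt⁻¹ * (l2inner φ₁ φ₁ - l2inner φ₀ φ₁)
      = (Δt⁻¹ * (l2inner φ₁ φ₁ - l2inner φ₀ φ₀) + Δt⁻¹ * l2inner (φ₀ - φ₁) (φ₀ - φ₁)) / 2 := by
    rw [l2inner_sub_sub_self hφ₀.continuous hφ₀.hasCompactSupport hφ₁.continuous
      hφ₁.hasCompactSupport]
    ring
  have hnum : l2inner (φ₀ - φ₁) (φ₀ - φ₁) / (4 * (μ * Δt))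
      ≤ Δt⁻¹ * l2inner (φ₀ - φ₁) (φ₀ - φ₁) / 2 := by
    rw [inv_mul_eq_div, div_div]
    exact div_le_div_of_nonneg_left (l2inner_self_nonneg _) (by positivity) (by nlinarith)
  have key : Δt⁻¹ * (l2inner φ₁ φ₁ - l2inner φ₀ φ₀) + 2 * κ * gradInner φ₁ φ₁
      ≤ |a| * (gradInner ψ ψ + gradInner φ₁ φ₁) + |c| * (gradInner φ₀ φ₀ + gradInner φ₁ φ₁) := by
    linarith [neg_mul_gradInner_le a hψ hφ₁, neg_mul_gradInner_le c hφ₀ hφ₁, mul_nonneg hθ.le hI]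
  calc l2inner φ₁ φ₁ - l2inner φ₀ φ₀ + 2 * Δt * κ * gradInner φ₁ φ₁
      = Δt * (Δt⁻¹ * (l2inner φ₁ φ₁ - l2inner φ₀ φ₀) + 2 * κ * gradInner φ₁ φ₁) := by
        field_simp
    _ ≤ _ := by gcongr

section Ensemble

variable {J : ℕ} {z : Fin J → ℕ → Euc d → Euc d} {n : ℕ}

lemma ensAvg_mem {V : Submodule ℝ (Euc d → Euc d)} (hz : ∀ k, z k n ∈ V) : ensAvg J z n ∈ V := by
  have h : ensAvg J z n = (J : ℝ)⁻¹ • ∑ k, z k n := by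
    funext x
    simp [ensAvg, Finset.sum_apply]
  rw [h]
  exact V.smul_mem _ (V.sum_mem fun k _ => hz k)

lemma fluct_mem {V : Submodule ℝ (Euc d → Euc d)} (hz : ∀ k, z k n ∈ V) (j : Fin J) :
    fluct J z j n ∈ V :=
  V.sub_mem (hz j) (ensAvg_mem hz)

lemma norm_fluct_le_lmax (j : Fin J) (x : Euc d) : ‖fluct J z j n x‖ ≤ lmax J z n x :=
  le_ciSup (f := fun k => ‖fluct J z k n x‖) (Set.finite_range _).bddAbove j

lemma continuous_lmax [Nonempty (Fin J)] (hz : ∀ k, Continuous (fluct J z k n)) :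
    Continuous (lmax J z n) := by
  have h : lmax J z n = fun x => univ.sup' univ_nonempty fun k => ‖fluct J z k n x‖ := by
    funext x
    rw [sup'_univ_eq_ciSup]
    rfl
  rw [h]
  exact Continuous.finset_sup'_apply _ fun k _ => (hz k).norm

end Ensemble

end EnsembleScheme

open EnsembleScheme

section Scheme

variable {d J M : ℕ} {Vh : Submodule ℝ (Euc d → Euc d)} {Δt μ : ℝ} {ν νm : Fin J → ℝ}
  {v w f1 f2 : Fin J → ℕ → Euc d → Euc d}

lemma SchemeSol.swap (h : SchemeSol d J Vh Δt μ ν νm M v w f1 f2) :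
    SchemeSol d J Vh Δt μ ν νm M w v f2 f1 :=
  ⟨fun j n hn => (h.1 j n hn).symm, fun j n => (h.2.1 j n).symm,
    fun n hn j χ hχ => (h.2.2 n hn j χ hχ).symm⟩

theorem SchemeSol.energy_step_le (hsol : SchemeSol d J Vh Δt μ ν νm M v w f1 f2)
    (hVh : ∀ χ ∈ Vh, IsC1Compact χ ∧ ∀ x, divg χ x = 0) (j : Fin J) {n : ℕ} (hn : n < M)
    (hΔt : 0 < Δt) (hμ : 1 / 2 ≤ μ) (hf : f1 j (n + 1) = 0) :
    l2inner (v j (n + 1)) (v j (n + 1)) - l2inner (v j n) (v j n)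
        + 2 * Δt * ((mean J ν + mean J νm) / 2) * gradInner (v j (n + 1)) (v j (n + 1))
      ≤ Δt * (|(ν j - νm j) / 2| * (gradInner (w j n) (w j n)
          + gradInner (v j (n + 1)) (v j (n + 1)))
        + |((ν j - mean J ν) + (νm j - mean J νm)) / 2| * (gradInner (v j n) (v j n)
          + gradInner (v j (n + 1)) (v j (n + 1)))) := by
  obtain ⟨hmem, -, heq⟩ := hsol
  have : Nonempty (Fin J) := ⟨j⟩
  have hw (k : Fin J) : w k n ∈ Vh := (hmem k n hn.le).2
  have hU := hVh _ (ensAvg_mem hw)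
  have hU' (k : Fin J) := hVh _ (fluct_mem hw k)
  have hv₁ := (hmem j (n + 1) hn).1
  exact energy_step_le_of_eq hΔt hμ (hVh _ (hmem j n hn.le).1).1 (hVh _ hv₁).1 (hVh _ (hw j)).1
    hU.1 hU.2 (hU' j).1 (hU' j).2 ((continuous_lmax fun k => (hU' k).1.continuous).pow 2)
    (fun x => pow_le_pow_left₀ (norm_nonneg _) (norm_fluct_le_lmax j x) 2) hf (heq n hn j _ hv₁).1

end Scheme

theorem energy_dissipation_zero_forcing_general
    (d : ℕ)
    (Ω : Set (Euc d))
    (Vh : Submodule ℝ (Euc d → Euc d)) (hVh : IsFEMSpace d Ω Vh)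
    (J : ℕ)
    (ν νm : Fin J → ℝ)
    (Δt μ : ℝ) (M : ℕ) (v w f1 f2 : Fin J → ℕ → Euc d → Euc d)
    (hsol : SchemeSol d J Vh Δt μ ν νm M v w f1 f2)
    (j : Fin J) (hΔt : 0 < Δt) (hμ : 1/2 < μ) (hα : 0 < alphaCoef J ν νm j)
    (hf1 : ∀ n, f1 j (n+1) = 0) (hf2 : ∀ n, f2 j (n+1) = 0) :
    ∀ n < M,
      l2norm (v j (n+1)) ^ 2 + l2norm (w j (n+1)) ^ 2
        + ((mean J ν + mean J νm) * Δt / 2) *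
            (gradNorm (v j (n+1)) ^ 2 + gradNorm (w j (n+1)) ^ 2)
      ≤ l2norm (v j n) ^ 2 + l2norm (w j n) ^ 2
        + ((mean J ν + mean J νm) * Δt / 2) *
            (gradNorm (v j n) ^ 2 + gradNorm (w j n) ^ 2) := by
  intro n hn
  have hVh' (χ : Euc d → Euc d) (hχ : χ ∈ Vh) : IsC1Compact χ ∧ ∀ x, divg χ x = 0 :=
    have h := hVh.2 χ hχ
    ⟨⟨h.1.of_le (by simp), h.2.1⟩, h.2.2.2⟩
  have hv := hsol.energy_step_le hVh' j hn hΔt hμ.le (hf1 n)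
  have hw := hsol.swap.energy_step_le hVh' j hn hΔt hμ.le (hf2 n)
  have hcoef : |(ν j - νm j) / 2| + |((ν j - mean J ν) + (νm j - mean J νm)) / 2|
      ≤ (mean J ν + mean J νm) / 2 := by
    rw [abs_div, abs_div, abs_two]
    unfold alphaCoef at hα
    linarith
  have hG : 0 ≤ Δt * (gradInner (v j n) (v j n) + gradInner (w j n) (w j n)
      + gradInner (v j (n + 1)) (v j (n + 1)) + gradInner (w j (n + 1)) (w j (n + 1))) :=
    mul_nonneg hΔt.le (by
      linarith [gradInner_self_nonneg (v j n), gradInner_self_nonneg (w j n),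
        gradInner_self_nonneg (v j (n + 1)), gradInner_self_nonneg (w j (n + 1))])
  simp only [l2norm_sq, gradNorm_sq]
  linarith [mul_le_mul_of_nonneg_right hcoef hG]

/-- Energy dissipation of the scheme with zero forcing: the discrete energy
`E_j^n := ‖v_j^n‖² + ‖w_j^n‖² + ((ν̄+ν̄_m)Δt/2)(‖∇v_j^n‖² + ‖∇w_j^n‖²)` is nonincreasing. -/
theorem energy_dissipation_zero_forcing
    (d : ℕ) (hd : d = 2 ∨ d = 3)
    (Ω : Set (Euc d)) (hΩo : IsOpen Ω) (hΩb : Bornology.IsBounded Ω)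
    (Vh : Submodule ℝ (Euc d → Euc d)) (hVh : IsFEMSpace d Ω Vh)
    (J : ℕ) (hJ : 1 ≤ J)
    (ν νm : Fin J → ℝ) (hν : ∀ j, 0 < ν j) (hνm : ∀ j, 0 < νm j)
    (Δt μ : ℝ) (M : ℕ) (v w f1 f2 : Fin J → ℕ → Euc d → Euc d)
    (hsol : SchemeSol d J Vh Δt μ ν νm M v w f1 f2)
    (j : Fin J) (hΔt : 0 < Δt) (hμ : 1/2 < μ) (hα : 0 < alphaCoef J ν νm j)
    (hf1 : ∀ n, f1 j (n+1) = 0) (hf2 : ∀ n, f2 j (n+1) = 0) :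
    ∀ n < M,
      l2norm (v j (n+1)) ^ 2 + l2norm (w j (n+1)) ^ 2
        + ((mean J ν + mean J νm) * Δt / 2) *
            (gradNorm (v j (n+1)) ^ 2 + gradNorm (w j (n+1)) ^ 2)
      ≤ l2norm (v j n) ^ 2 + l2norm (w j n) ^ 2
        + ((mean J ν + mean J νm) * Δt / 2) *
            (gradNorm (v j n) ^ 2 + gradNorm (w j n) ^ 2) :=
  energy_dissipation_zero_forcing_general d Ω Vh hVh J ν νm Δt μ M v w f1 f2 hsol j hΔt hμ hα hf1
    hf2
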